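/- The row-wise softmax function on ℝ^n is 1-Lipschitz with respect to the Euclidean norm (indeed its Jacobian diag(s) − s sᵀ has operator norm at most 1). -/

import Mathlib

/-!
Softmax is the gradient of log-sum-exp, so its Jacobian at `z` is `diag s - s sᵀ` with
`s = softmax z`, i.e. `(J v)ᵢ = sᵢ (vᵢ - ⟨s, v⟩)`. Since `sᵢ² ≤ sᵢ`, `‖J v‖²` is at most the
`s`-variance `∑ sᵢ (vᵢ - ⟨s, v⟩)²` of `v`, which is at most the second moment `∑ sᵢ vᵢ² ≤ ‖v‖²`.
The mean value inequality turns `‖J‖ ≤ 1` into the Lipschitz bound.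
-/

open Real Finset

section SubprobabilityWeights

variable {ι : Type*} [Fintype ι] {p : ι → ℝ}

theorem sum_mul_sq_sub_sum_mul_le (hp_sum : ∑ i, p i ≤ 1) (v : ι → ℝ) :
    ∑ i, p i * (v i - ∑ j, p j * v j) ^ 2 ≤ ∑ i, p i * v i ^ 2 := by
  set m := ∑ j, p j * v j
  have hexpand :
      ∑ i, p i * (v i - m) ^ 2 = ∑ i, p i * v i ^ 2 - 2 * m * m + m ^ 2 * ∑ i, p i := by
    have hterm : ∀ i, p i * (v i - m) ^ 2 = p i * v i ^ 2 - 2 * m * (p i * v i) + m ^ 2 * p i :=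
      fun i => by ring
    simp only [hterm, sum_add_distrib, sum_sub_distrib, ← mul_sum, m]
  rw [hexpand]
  nlinarith [sq_nonneg m]

theorem sum_sq_mul_sub_sum_mul_le (hp : ∀ i, 0 ≤ p i) (hp_sum : ∑ i, p i ≤ 1) (v : ι → ℝ) :
    ∑ i, (p i * (v i - ∑ j, p j * v j)) ^ 2 ≤ ∑ i, v i ^ 2 := by
  have hp_le_one : ∀ i, p i ≤ 1 := fun i =>
    (single_le_sum (fun j _ => hp j) (mem_univ i)).trans hp_sum
  calc ∑ i, (p i * (v i - ∑ j, p j * v j)) ^ 2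
      ≤ ∑ i, p i * (v i - ∑ j, p j * v j) ^ 2 := by
        gcongr with i
        rw [mul_pow]
        exact mul_le_mul_of_nonneg_right (by nlinarith [hp i, hp_le_one i]) (sq_nonneg _)
    _ ≤ ∑ i, p i * v i ^ 2 := sum_mul_sq_sub_sum_mul_le hp_sum v
    _ ≤ ∑ i, v i ^ 2 := by
        gcongr with i
        exact mul_le_of_le_one_left (sq_nonneg _) (hp_le_one i)

end SubprobabilityWeights

section Softmax

variable {ι : Type*} [Fintype ι]

noncomputable def softmax (z : EuclideanSpace ℝ ι) : EuclideanSpace ℝ ι :=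
  WithLp.toLp 2 fun i => exp (z i) / ∑ j, exp (z j)

noncomputable def logSumExp (z : EuclideanSpace ℝ ι) : ℝ :=
  log (∑ j, exp (z j))

variable (z : EuclideanSpace ℝ ι)

theorem softmax_apply (i : ι) : softmax z i = exp (z i) / ∑ j, exp (z j) := rfl

theorem softmax_nonneg (i : ι) : 0 ≤ softmax z i := by
  rw [softmax_apply]; positivity

theorem sum_softmax_le_one : ∑ i, softmax z i ≤ 1 := by
  simp only [softmax_apply, ← sum_div]
  exact div_self_le_one _

theorem sum_exp_pos [Nonempty ι] : 0 < ∑ j, exp (z j) :=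
  sum_pos (fun _ _ => exp_pos _) univ_nonempty

theorem softmax_apply_eq_exp_sub_logSumExp [Nonempty ι] (i : ι) :
    softmax z i = exp (z i - logSumExp z) := by
  rw [exp_sub, logSumExp, exp_log (sum_exp_pos z), softmax_apply]

theorem hasFDerivAt_logSumExp [Nonempty ι] :
    HasFDerivAt logSumExp (∑ j, softmax z j • EuclideanSpace.proj (𝕜 := ℝ) j) z := by
  have hsum : HasFDerivAt (fun x : EuclideanSpace ℝ ι => ∑ j, exp (x j))
      (∑ j, exp (z j) • EuclideanSpace.proj (𝕜 := ℝ) j) z :=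
    HasFDerivAt.fun_sum fun j _ => (EuclideanSpace.proj (𝕜 := ℝ) j).hasFDerivAt.exp
  refine (hsum.log (sum_exp_pos z).ne').congr_fderiv ?_
  simp only [smul_sum, smul_smul, softmax_apply, div_eq_inv_mul]

theorem hasFDerivAt_softmax_apply (i : ι) :
    HasFDerivAt (fun x => softmax x i)
      (softmax z i • (EuclideanSpace.proj (𝕜 := ℝ) i - ∑ j, softmax z j • EuclideanSpace.proj j))
      z := by
  have : Nonempty ι := ⟨i⟩
  have h := ((EuclideanSpace.proj (𝕜 := ℝ) i).hasFDerivAt.fun_sub (hasFDerivAt_logSumExp z)).exp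
  simp only [EuclideanSpace.coe_proj, ← softmax_apply_eq_exp_sub_logSumExp] at h
  exact h

noncomputable def softmaxJacobian : EuclideanSpace ℝ ι →L[ℝ] EuclideanSpace ℝ ι :=
  (EuclideanSpace.equiv ι ℝ).symm.toContinuousLinearMap ∘L ContinuousLinearMap.pi fun i =>
    softmax z i • (EuclideanSpace.proj i - ∑ j, softmax z j • EuclideanSpace.proj j)

theorem softmaxJacobian_apply (v : EuclideanSpace ℝ ι) (i : ι) :
    softmaxJacobian z v i = softmax z i * (v i - ∑ j, softmax z j * v j) := by
  simp [softmaxJacobian]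

theorem hasFDerivAt_softmax : HasFDerivAt softmax (softmaxJacobian z) z := by
  rw [← hasFDerivWithinAt_univ, hasFDerivWithinAt_euclidean]
  exact fun i => (hasFDerivAt_softmax_apply z i).hasFDerivWithinAt

theorem norm_softmaxJacobian_le_one : ‖softmaxJacobian z‖ ≤ 1 := by
  refine ContinuousLinearMap.opNorm_le_bound _ zero_le_one fun v => ?_
  rw [one_mul, ← sq_le_sq₀ (norm_nonneg _) (norm_nonneg _), EuclideanSpace.real_norm_sq_eq,
    EuclideanSpace.real_norm_sq_eq]
  simp only [softmaxJacobian_apply]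
  exact sum_sq_mul_sub_sum_mul_le (softmax_nonneg z) (sum_softmax_le_one z) v

end Softmax

/-- The softmax function on `ℝⁿ` (Euclidean norm) is `1`-Lipschitz. -/
theorem softmax_lipschitz (n : ℕ) :
    LipschitzWith 1 (fun z : EuclideanSpace ℝ (Fin n) =>
      (WithLp.toLp 2 (fun i => Real.exp (z i) / ∑ j, Real.exp (z j)) : EuclideanSpace ℝ (Fin n))) := by
  refine lipschitzWith_of_nnnorm_fderiv_le (𝕜 := ℝ) (f := softmax)
    (fun z => (hasFDerivAt_softmax z).differentiableAt) fun z => ?_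
  rw [(hasFDerivAt_softmax z).fderiv]
  exact_mod_cast norm_softmaxJacobian_le_one z
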